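/- Let M = (E,ρ) be a finite matroid of rank d ≥ 1, let 0 ≤ i ≤ d−1, and let e ∈ E be a link (neither loop nor coloop). Then for every S ∈ 𝒮ᵢ^M with e ∈ S, μᵢ^M(S) = −μᵢ^{M∖e}(S∖e) + μᵢ^{M/e}(S/e), where terms for subsets not in the respective poset are interpreted as 0. -/

import Mathlib

open Finset

/-- A matroid on a finite ground set, presented by its (Whitney) rank function:
normalized, monotone, and submodular. -/
structure FinMatroid (α : Type*) [DecidableEq α] [Fintype α] where
  rk : Finset α → ℕ
  rk_le_card : ∀ S, rk S ≤ S.card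
  rk_mono : ∀ ⦃S T : Finset α⦄, S ⊆ T → rk S ≤ rk T
  rk_submod : ∀ S T : Finset α, rk (S ∪ T) + rk (S ∩ T) ≤ rk S + rk T

namespace FinMatroid

variable {α : Type*} [DecidableEq α] [Fintype α]

/-- The rank `ρ(E)` of the matroid. -/
def rank (M : FinMatroid α) : ℕ := M.rk Finset.univ

lemma rk_empty (M : FinMatroid α) : M.rk ∅ = 0 :=
  Nat.le_zero.mp (by simpa using M.rk_le_card ∅)

lemma rk_le_rank (M : FinMatroid α) (S : Finset α) : M.rk S ≤ M.rank :=
  M.rk_mono (Finset.subset_univ S)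

/-- A loop is an element of rank zero. -/
def IsLoop (M : FinMatroid α) (e : α) : Prop := M.rk {e} = 0

/-- A coloop: deleting it lowers the rank. -/
def IsColoop (M : FinMatroid α) (e : α) : Prop :=
  M.rk (Finset.univ.erase e) + 1 = M.rank

/-- A link is an element which is neither a loop nor a coloop. -/
def IsLink (M : FinMatroid α) (e : α) : Prop := ¬ M.IsLoop e ∧ ¬ M.IsColoop e

/-- The embedding of the ground set with `e` removed. -/
def emb (e : α) : {x : α // x ≠ e} ↪ α := Function.Embedding.subtype _

lemma e_not_mem_map (e : α) (S : Finset {x : α // x ≠ e}) : e ∉ S.map (emb e) := by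
  simp [emb]

/-- Deletion `M ∖ e` of an element. -/
def delete (M : FinMatroid α) (e : α) : FinMatroid {x : α // x ≠ e} where
  rk S := M.rk (S.map (emb e))
  rk_le_card S := by simpa using M.rk_le_card (S.map (emb e))
  rk_mono S T h := M.rk_mono (Finset.map_subset_map.mpr h)
  rk_submod S T := by
    have := M.rk_submod (S.map (emb e)) (T.map (emb e))
    rwa [← Finset.map_union, ← Finset.map_inter] at this

/-- Contraction `M / e` of an element. -/
def contract (M : FinMatroid α) (e : α) : FinMatroid {x : α // x ≠ e} where
  rk S := M.rk (insert e (S.map (emb e))) - M.rk {e}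
  rk_le_card S := by
    have h1 : M.rk (insert e (S.map (emb e))) ≤ M.rk (S.map (emb e)) + M.rk {e} := by
      have := M.rk_submod (S.map (emb e)) {e}
      have hie : S.map (emb e) ∩ {e} = ∅ := by
        simp [Finset.eq_empty_iff_forall_notMem, emb]
      rw [Finset.union_comm] at this
      rw [hie, M.rk_empty, ← Finset.insert_eq] at this
      omega
    have h2 := M.rk_le_card (S.map (emb e))
    simp only [Finset.card_map] at h2
    omega
  rk_mono S T h := by
    have := M.rk_mono (Finset.insert_subset_insert e ((Finset.map_subset_map (f := emb e)).mpr h))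
    omega
  rk_submod S T := by
    have key := M.rk_submod (insert e (S.map (emb e))) (insert e (T.map (emb e)))
    have hU : insert e (S.map (emb e)) ∪ insert e (T.map (emb e))
        = insert e ((S ∪ T).map (emb e)) := by
      rw [Finset.map_union]; ext x
      simp only [Finset.mem_union, Finset.mem_insert]; tauto
    have hI : insert e (S.map (emb e)) ∩ insert e (T.map (emb e))
        = insert e ((S ∩ T).map (emb e)) := by
      rw [Finset.map_inter]; ext x
      simp only [Finset.mem_inter, Finset.mem_insert]; tauto
    rw [hU, hI] at key
    have l1 : M.rk {e} ≤ M.rk (insert e ((S ∪ T).map (emb e))) :=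
      M.rk_mono (by simp)
    have l2 : M.rk {e} ≤ M.rk (insert e ((S ∩ T).map (emb e))) :=
      M.rk_mono (by simp)
    have l3 : M.rk {e} ≤ M.rk (insert e (S.map (emb e))) := M.rk_mono (by simp)
    have l4 : M.rk {e} ≤ M.rk (insert e (T.map (emb e))) := M.rk_mono (by simp)
    omega

/-- The Tutte polynomial
`T_M(x,y) = Σ_{S ⊆ E} (x-1)^{ρ(E)-ρ(S)} (y-1)^{#S-ρ(S)}`, evaluated in a
commutative ring. -/
def tutte (M : FinMatroid α) {R : Type*} [CommRing R] (x y : R) : R :=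
  ∑ S : Finset α, (x - 1) ^ (M.rank - M.rk S) * (y - 1) ^ (S.card - M.rk S)

/-- The specialization `Y_M(q,t) = (1-q)^{ρ(E)} q^{σ(E)} T_M((qt+1-q)/(1-q), 1/q)`. -/
noncomputable def Y (M : FinMatroid α) {K : Type*} [Field K] (q t : K) : K :=
  (1 - q) ^ M.rank * q ^ (Fintype.card α - M.rank) *
    M.tutte ((q * t + 1 - q) / (1 - q)) (1 / q)

open Classical in
/-- The Möbius function `μ(0̂, S)` of the poset obtained from the finsets satisfying `P`
(ordered by inclusion) by adjoining a bottom element `0̂`; by convention `μ(0̂,S) = 0`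
for sets not satisfying `P`. -/
noncomputable def mob (P : Finset α → Prop) : Finset α → ℤ := fun S =>
  if P S then -1 - ∑ T ∈ (S.powerset.erase S).attach, mob P T.1 else 0
termination_by S => S.card
decreasing_by
  have hT := T.2
  simp only [Finset.mem_erase, Finset.mem_powerset] at hT
  exact Finset.card_lt_card (HasSubset.Subset.ssubset_of_ne hT.2 hT.1)

/-- Membership in `𝒮ᵢ^M = {S ⊆ E : ρ(S) ≥ d - i}` (with `i : ℤ`). -/
def Smem (M : FinMatroid α) (i : ℤ) (S : Finset α) : Prop :=
  (M.rank : ℤ) - i ≤ (M.rk S : ℤ)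

/-- The Möbius function `μᵢ^M(S) = μ(0̂, S)` of the lattice `ℒᵢ^M = {0̂} ⊕ 𝒮ᵢ^M`. -/
noncomputable def mu (M : FinMatroid α) (i : ℤ) : Finset α → ℤ := mob (M.Smem i)

/-- `W_i^M(p) = Σ_{S ∈ 𝒮ᵢ^M} μᵢ^M(S) (-p)^{#S-d+1+i}`, evaluated in a commutative
ring.  (Terms with `S ∉ 𝒮ᵢ^M` vanish since `μᵢ^M` is zero there.) -/
noncomputable def W (M : FinMatroid α) (i : ℤ) {R : Type*} [CommRing R] (p : R) : R :=
  ∑ S : Finset α, (M.mu i S : R) * (-p) ^ (((S.card : ℤ) - M.rank + 1 + i).toNat)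

end FinMatroid

section Helpers

variable {α : Type*} [DecidableEq α] [Fintype α]

open Classical in
lemma sum_mob (P : Finset α → Prop) (hP : ∀ ⦃T S : Finset α⦄, T ⊆ S → P T → P S)
    (S : Finset α) :
    ∑ T ∈ S.powerset, FinMatroid.mob P T = if P S then -1 else 0 := by
  by_cases h : P S
  · rw [if_pos h]
    have hmem : S ∈ S.powerset := Finset.mem_powerset.mpr (subset_refl S)
    rw [← Finset.add_sum_erase _ _ hmem, FinMatroid.mob, if_pos h,
      Finset.sum_attach (S.powerset.erase S) (FinMatroid.mob P)]
    ring
  · rw [if_neg h]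
    apply Finset.sum_eq_zero
    intro T hT
    rw [FinMatroid.mob, if_neg]
    exact fun hPT => h (hP (Finset.mem_powerset.mp hT) hPT)

lemma neg_one_pow_sub' (n k : ℕ) (h : k ≤ n) :
    ((-1 : ℤ)) ^ (n - k) = (-1) ^ n * (-1) ^ k := by
  have h2 : ((-1 : ℤ)) ^ (n - k) * ((-1 : ℤ)) ^ k = (-1) ^ n := by
    rw [← pow_add]; congr 1; omega
  have h3 : ((-1 : ℤ)) ^ k * ((-1 : ℤ)) ^ k = 1 := by
    rw [← pow_add, ← two_mul, pow_mul]; norm_num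
  calc ((-1 : ℤ)) ^ (n - k) = ((-1 : ℤ)) ^ (n - k) * (((-1 : ℤ)) ^ k * ((-1 : ℤ)) ^ k) := by
        rw [h3, mul_one]
    _ = (-1) ^ n * (-1) ^ k := by rw [← mul_assoc, h2]

open Classical in
lemma alt_sum (S U : Finset α) (hU : U ⊆ S) :
    ∑ T ∈ S.powerset, (if U ⊆ T then ((-1 : ℤ)) ^ (S.card - T.card) else 0)
      = if U = S then 1 else 0 := by
  rw [Finset.sum_ite, Finset.sum_const_zero, add_zero]
  have hbij : ∑ T ∈ S.powerset.filter (fun T => U ⊆ T), ((-1 : ℤ)) ^ (S.card - T.card)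
      = ∑ V ∈ (S \ U).powerset, ((-1 : ℤ)) ^ ((S \ U).card - V.card) := by
    apply Finset.sum_nbij' (i := fun T => T \ U) (j := fun V => U ∪ V)
    · intro T hT
      simp only [Finset.mem_filter, Finset.mem_powerset] at hT
      exact Finset.mem_powerset.mpr (Finset.sdiff_subset_sdiff hT.1 (subset_refl U))
    · intro V hV
      simp only [Finset.mem_powerset] at hV
      refine Finset.mem_filter.mpr ⟨Finset.mem_powerset.mpr ?_, Finset.subset_union_left⟩
      exact Finset.union_subset hU (hV.trans (Finset.sdiff_subset))
    · intro T hT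
      simp only [Finset.mem_filter, Finset.mem_powerset] at hT
      exact Finset.union_sdiff_of_subset hT.2
    · intro V hV
      simp only [Finset.mem_powerset] at hV
      have hdisj : Disjoint U V := by
        refine Finset.disjoint_left.mpr fun a haU haV => ?_
        exact (Finset.mem_sdiff.mp (hV haV)).2 haU
      rw [Finset.union_sdiff_cancel_left hdisj]
    · intro T hT
      simp only [Finset.mem_filter, Finset.mem_powerset] at hT
      congr 1
      have h1 : U.card ≤ T.card := Finset.card_le_card hT.2
      have h2 : T.card ≤ S.card := Finset.card_le_card hT.1
      rw [Finset.card_sdiff_of_subset hU, Finset.card_sdiff_of_subset hT.2]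
      omega
  rw [hbij]
  have hterm : ∀ V ∈ (S \ U).powerset,
      ((-1 : ℤ)) ^ ((S \ U).card - V.card) = (-1) ^ (S \ U).card * (-1) ^ V.card := by
    intro V hV
    exact neg_one_pow_sub' _ _ (Finset.card_le_card (Finset.mem_powerset.mp hV))
  rw [Finset.sum_congr rfl hterm, ← Finset.mul_sum, Finset.sum_powerset_neg_one_pow_card]
  by_cases h : S \ U = ∅
  · have hUS : U = S := Finset.Subset.antisymm hU (Finset.sdiff_eq_empty_iff_subset.mp h)
    simp [h, hUS]
  · have hUS : U ≠ S := fun hc => h (by rw [hc]; simp)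
    simp [h, hUS]

open Classical in
lemma mob_inversion (f : Finset α → ℤ) (S : Finset α) :
    ∑ T ∈ S.powerset, ((-1 : ℤ)) ^ (S.card - T.card) * (∑ U ∈ T.powerset, f U) = f S := by
  have h1 : ∀ T ∈ S.powerset, ((-1 : ℤ)) ^ (S.card - T.card) * (∑ U ∈ T.powerset, f U)
      = ∑ U ∈ S.powerset, (if U ⊆ T then ((-1 : ℤ)) ^ (S.card - T.card) else 0) * f U := by
    intro T hT
    have hfil : S.powerset.filter (fun U => U ⊆ T) = T.powerset := by
      ext U
      simp only [Finset.mem_filter, Finset.mem_powerset]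
      exact ⟨fun h => h.2, fun h => ⟨h.trans (Finset.mem_powerset.mp hT), h⟩⟩
    rw [Finset.mul_sum, ← hfil, Finset.sum_filter]
    apply Finset.sum_congr rfl
    intro U hU
    by_cases h : U ⊆ T <;> simp [h]
  rw [Finset.sum_congr rfl h1, Finset.sum_comm]
  have h2 : ∀ U ∈ S.powerset,
      ∑ T ∈ S.powerset, (if U ⊆ T then ((-1 : ℤ)) ^ (S.card - T.card) else 0) * f U
        = (if U = S then 1 else 0) * f U := by
    intro U hU
    rw [← Finset.sum_mul, alt_sum S U (Finset.mem_powerset.mp hU)]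
  rw [Finset.sum_congr rfl h2]
  simp only [ite_mul, one_mul, zero_mul]
  rw [Finset.sum_ite_eq' S.powerset S f]
  simp

open Classical in
lemma mob_closed (P : Finset α → Prop) (hP : ∀ ⦃T S : Finset α⦄, T ⊆ S → P T → P S)
    (S : Finset α) :
    FinMatroid.mob P S
      = -∑ T ∈ S.powerset, (if P T then ((-1 : ℤ)) ^ (S.card - T.card) else 0) := by
  have key : ∑ T ∈ S.powerset, ((-1 : ℤ)) ^ (S.card - T.card) * (if P T then (-1 : ℤ) else 0)
      = FinMatroid.mob P S := by
    rw [← mob_inversion (FinMatroid.mob P) S]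
    exact Finset.sum_congr rfl fun T _ => by rw [sum_mob P hP T]
  rw [← key, ← Finset.sum_neg_distrib]
  apply Finset.sum_congr rfl
  intro T _
  by_cases h : P T <;> simp [h]

lemma Smem_upward (M : FinMatroid α) (i : ℤ) :
    ∀ ⦃T S : Finset α⦄, T ⊆ S → M.Smem i T → M.Smem i S := by
  intro T S hTS hT
  exact le_trans hT (by exact_mod_cast M.rk_mono hTS)

end Helpers

/-- deletion–contraction for the Möbius functions `μᵢ` at a link:
`μᵢ^M(S) = -μᵢ^{M∖e}(S∖e) + μᵢ^{M/e}(S/e)` (terms for sets outside the respective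
posets being zero by convention). -/
theorem mu_deletion_contraction {α : Type*} [DecidableEq α] [Fintype α]
    (M : FinMatroid α) (hd : 1 ≤ M.rank) (i : ℤ) (hi0 : 0 ≤ i)
    (hi : i ≤ (M.rank : ℤ) - 1) (e : α) (he : M.IsLink e)
    (S : Finset α) (hS : M.Smem i S) (heS : e ∈ S) :
    M.mu i S =
      -((M.delete e).mu i (S.subtype (· ≠ e))) +
        (M.contract e).mu i (S.subtype (· ≠ e)) := by
  classical
  -- basic rank facts
  have hrk_e : M.rk {e} = 1 := by
    have h1 := M.rk_le_card {e}
    have h0 : M.rk {e} ≠ 0 := he.1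
    simp only [Finset.card_singleton] at h1
    omega
  have huniv : (Finset.univ : Finset {x : α // x ≠ e}).map (FinMatroid.emb e)
      = Finset.univ.erase e := by
    ext x
    simp only [Finset.mem_map, Finset.mem_erase, Finset.mem_univ, and_true]
    constructor
    · rintro ⟨y, h⟩; exact h.2 ▸ y.2
    · intro hx; exact ⟨⟨x, hx⟩, trivial, rfl⟩

  have hdel_rank : (M.delete e).rank = M.rank := by
    have hd' : (M.delete e).rank = M.rk (Finset.univ.erase e) := by
      simp only [FinMatroid.rank, FinMatroid.delete, huniv]
    have hle : M.rank ≤ M.rk (Finset.univ.erase e) + M.rk {e} := by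
      have hsub := M.rk_submod (Finset.univ.erase e) {e}
      have hu : Finset.univ.erase e ∪ {e} = Finset.univ := by
        ext x; by_cases hx : x = e <;> simp [hx]
      have hi2 : Finset.univ.erase e ∩ {e} = ∅ := by
        ext x; simp only [Finset.mem_inter, Finset.mem_erase, Finset.mem_singleton,
          Finset.notMem_empty, iff_false]
        rintro ⟨⟨hne, -⟩, rfl⟩; exact hne rfl
      rw [hu, hi2, M.rk_empty] at hsub
      simpa [FinMatroid.rank] using hsub
    have h2 : M.rk (Finset.univ.erase e) ≤ M.rank := M.rk_le_rank _
    have hne : M.rk (Finset.univ.erase e) + 1 ≠ M.rank := he.2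
    omega
  have hcon_rank : (M.contract e).rank = M.rank - 1 := by
    simp only [FinMatroid.rank, FinMatroid.contract, huniv,
      Finset.insert_erase (Finset.mem_univ e), hrk_e]
  -- set up the ground-set bijection
  set s0 := S.erase e with hs0
  have hS' : (S.subtype (· ≠ e)).map (FinMatroid.emb e) = s0 := by
    rw [hs0, FinMatroid.emb, Finset.subtype_map, Finset.filter_ne']
  have heS0 : e ∉ s0 := Finset.notMem_erase e S
  have hSins : S = insert e s0 := (Finset.insert_erase heS).symm
  have hScard : (S.subtype (· ≠ e)).card = s0.card := by
    rw [← hS', Finset.card_map]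
  have hbij : ∀ g : Finset α → ℤ,
      ∑ T' ∈ (S.subtype (· ≠ e)).powerset, g (T'.map (FinMatroid.emb e))
        = ∑ T ∈ s0.powerset, g T := by
    intro g
    apply Finset.sum_nbij' (i := fun T' => T'.map (FinMatroid.emb e))
        (j := fun T => T.subtype (· ≠ e))
    · intro T' hT'
      rw [Finset.mem_powerset] at hT' ⊢
      rw [← hS']
      exact Finset.map_subset_map.mpr hT'
    · intro T hT
      rw [Finset.mem_powerset] at hT ⊢
      intro a ha
      rw [Finset.mem_subtype] at ha ⊢
      exact Finset.mem_of_mem_erase (hT ha)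
    · intro T' _
      ext a
      simp only [Finset.mem_subtype, Finset.mem_map, FinMatroid.emb,
        Function.Embedding.coe_subtype]
      constructor
      · rintro ⟨y, hy, hya⟩; exact Subtype.ext hya ▸ hy
      · intro ha; exact ⟨a, ha, rfl⟩
    · intro T hT
      rw [Finset.mem_powerset] at hT
      exact Finset.subtype_map_of_mem fun x hx => (Finset.mem_erase.mp (hT hx)).1
    · intro T' _; rfl
  -- rewrite the three Möbius functions via the closed formula
  rw [FinMatroid.mu, FinMatroid.mu, FinMatroid.mu,
    mob_closed _ (Smem_upward M i), mob_closed _ (Smem_upward (M.delete e) i),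
    mob_closed _ (Smem_upward (M.contract e) i)]
  -- identify the deletion sum
  have hdel : ∑ T' ∈ (S.subtype (· ≠ e)).powerset,
      (if (M.delete e).Smem i T'
        then ((-1 : ℤ)) ^ ((S.subtype (· ≠ e)).card - T'.card) else 0)
      = ∑ T ∈ s0.powerset, (if M.Smem i T then ((-1 : ℤ)) ^ (s0.card - T.card) else 0) := by
    rw [← hbij fun T => if M.Smem i T then ((-1 : ℤ)) ^ (s0.card - T.card) else 0]
    apply Finset.sum_congr rfl
    intro T' _
    have h1 : (M.delete e).Smem i T' ↔ M.Smem i (T'.map (FinMatroid.emb e)) := by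
      unfold FinMatroid.Smem
      rw [hdel_rank]
      exact Iff.rfl
    rw [Finset.card_map, hScard]
    simp only [h1]
  -- identify the contraction sum
  have hcon : ∑ T' ∈ (S.subtype (· ≠ e)).powerset,
      (if (M.contract e).Smem i T'
        then ((-1 : ℤ)) ^ ((S.subtype (· ≠ e)).card - T'.card) else 0)
      = ∑ T ∈ s0.powerset,
        (if M.Smem i (insert e T) then ((-1 : ℤ)) ^ (s0.card - T.card) else 0) := by
    rw [← hbij fun T => if M.Smem i (insert e T) then ((-1 : ℤ)) ^ (s0.card - T.card) else 0]
    apply Finset.sum_congr rfl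
    intro T' _
    have hrk1 : 1 ≤ M.rk (insert e (T'.map (FinMatroid.emb e))) := by
      calc 1 = M.rk {e} := hrk_e.symm
        _ ≤ _ := M.rk_mono (by simp)
    have h2 : (M.contract e).Smem i T' ↔ M.Smem i (insert e (T'.map (FinMatroid.emb e))) := by
      unfold FinMatroid.Smem
      rw [hcon_rank]
      have hco : (M.contract e).rk T'
          = M.rk (insert e (T'.map (FinMatroid.emb e))) - 1 := by
        simp [FinMatroid.contract, hrk_e]
      rw [hco, Nat.cast_sub hrk1, Nat.cast_sub hd]
      omega
    rw [Finset.card_map, hScard]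
    simp only [h2]
  rw [hdel, hcon]
  -- split the big sum over subsets of S
  have hLHS : ∑ T ∈ S.powerset, (if M.Smem i T then ((-1 : ℤ)) ^ (S.card - T.card) else 0)
      = ∑ T ∈ s0.powerset,
          (-(if M.Smem i T then ((-1 : ℤ)) ^ (s0.card - T.card) else 0)
            + (if M.Smem i (insert e T) then ((-1 : ℤ)) ^ (s0.card - T.card) else 0)) := by
    rw [hSins, Finset.sum_powerset_insert heS0, Finset.sum_add_distrib]
    congr 1
    · apply Finset.sum_congr rfl
      intro T hT
      have hTs : T.card ≤ s0.card := Finset.card_le_card (Finset.mem_powerset.mp hT)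
      have hex : (insert e s0).card - T.card = (s0.card - T.card) + 1 := by
        rw [Finset.card_insert_of_notMem heS0]; omega
      by_cases h : M.Smem i T <;> simp [h, hex, pow_succ]
    · apply Finset.sum_congr rfl
      intro T hT
      have hTs : T.card ≤ s0.card := Finset.card_le_card (Finset.mem_powerset.mp hT)
      have heT : e ∉ T := fun h => heS0 (Finset.mem_powerset.mp hT h)
      have hex : (insert e s0).card - (insert e T).card = s0.card - T.card := by
        rw [Finset.card_insert_of_notMem heS0, Finset.card_insert_of_notMem heT]
        omega
      rw [hex]
  rw [hLHS, Finset.sum_add_distrib, Finset.sum_neg_distrib]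
  ring
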